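/- The T×T matrix A₂ with entries a_{n',k} = ∏_{ℓ∈[K+T], ℓ≠k} (α_{n'} − β_ℓ)/(β_k − β_ℓ) for n' ∈ [T] and k ∈ {K+1,…,K+T} is invertible, provided α_1,…,α_T, β_1,…,β_{K+T} are pairwise distinct elements of the field. -/
import Mathlib


open Finset

/-- The `T × T` matrix of Lagrange coefficients
`a_{n',k} = ∏_{ℓ ≠ K+k} (α_{n'} - β_ℓ)/(β_{K+k} - β_ℓ)` is invertible, provided
`α_1,…,α_T, β_1,…,β_{K+T}` are pairwise distinct. -/
theorem lagrange_coefficient_matrix_invertible {𝔽 : Type*} [Field 𝔽] (K T : ℕ)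
    (α : Fin T → 𝔽) (β : Fin (K + T) → 𝔽)
    (hα : Function.Injective α) (hβ : Function.Injective β)
    (hαβ : ∀ i j, α i ≠ β j)
    (A : Matrix (Fin T) (Fin T) 𝔽)
    (hA : ∀ n' k, A n' k =
      ∏ ℓ ∈ Finset.univ.erase (Fin.natAdd K k),
        (α n' - β ℓ) / (β (Fin.natAdd K k) - β ℓ)) :
    IsUnit A := by
  classical
  rw [← Matrix.mulVec_injective_iff_isUnit]
  rw [← Matrix.coe_mulVecLin]
  rw [injective_iff_map_eq_zero]
  intro v hv
  funext k₀
  have hβinj : Set.InjOn β (Finset.univ : Finset (Fin (K + T))) := fun a _ b _ h => hβ h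
  -- the polynomial  p = ∑ k, v k • L_{K+k}
  set p : Polynomial 𝔽 :=
    ∑ k : Fin T, Polynomial.C (v k) * Lagrange.basis Finset.univ β (Fin.natAdd K k) with hp
  -- evaluation of the basis polynomial at α n' gives the matrix entry
  have heval_basis : ∀ (n' k : Fin T),
      (Lagrange.basis Finset.univ β (Fin.natAdd K k)).eval (α n') = A n' k := by
    intro n' k
    rw [hA, Lagrange.basis, Polynomial.eval_prod]
    refine Finset.prod_congr rfl fun j hj => ?_
    rw [Lagrange.basisDivisor, Polynomial.eval_mul, Polynomial.eval_C, Polynomial.eval_sub,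
      Polynomial.eval_X, Polynomial.eval_C, div_eq_inv_mul]
  -- p vanishes at all β_i with i < K
  have hpβ : ∀ i : Fin K, p.eval (β (Fin.castAdd T i)) = 0 := by
    intro i
    rw [hp, Polynomial.eval_finset_sum]
    refine Finset.sum_eq_zero fun k _ => ?_
    rw [Polynomial.eval_mul, Lagrange.eval_basis_of_ne ?_ (Finset.mem_univ _), mul_zero]
    intro h
    have := congrArg Fin.val h
    simp [Fin.natAdd, Fin.castAdd, Fin.castLE] at this
    omega
  -- p vanishes at all α n'
  have hpα : ∀ n' : Fin T, p.eval (α n') = 0 := by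
    intro n'
    rw [hp, Polynomial.eval_finset_sum]
    have := congrFun hv n'
    simp only [Matrix.mulVecLin_apply, Matrix.mulVec, dotProduct, Pi.zero_apply] at this
    rw [← this]
    refine Finset.sum_congr rfl fun k _ => ?_
    rw [Polynomial.eval_mul, Polynomial.eval_C, heval_basis, mul_comm]
  -- the combined root function
  have hT : 0 < K + T := by have := k₀.isLt; omega
  set f : Fin K ⊕ Fin T → 𝔽 := Sum.elim (fun i => β (Fin.castAdd T i)) α with hf
  have hfinj : Function.Injective f := by
    intro a b hab
    rcases a with a | a <;> rcases b with b | b <;> simp only [hf, Sum.elim_inl, Sum.elim_inr] at hab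
    · exact congrArg Sum.inl (Fin.castAdd_injective _ _ (hβ hab))
    · exact absurd hab.symm (hαβ _ _)
    · exact absurd hab (hαβ _ _)
    · exact congrArg Sum.inr (hα hab)
  -- degree bound
  have hdeg : p.natDegree < K + T := by
    have : p.natDegree ≤ K + T - 1 := by
      refine Polynomial.natDegree_sum_le_of_forall_le _ _ fun k _ => ?_
      refine le_trans (Polynomial.natDegree_mul_le) ?_
      rw [Polynomial.natDegree_C, zero_add]
      have hdb := Lagrange.degree_basis hβinj (Finset.mem_univ (Fin.natAdd K k))
      have := Polynomial.natDegree_eq_of_degree_eq_some hdb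
      simp only [Finset.card_univ, Fintype.card_fin] at this
      omega
    omega
  have hp0 : p = 0 := by
    refine Polynomial.eq_zero_of_natDegree_lt_card_of_eval_eq_zero p hfinj ?_ ?_
    · rintro (i | n')
      · exact hpβ i
      · exact hpα n'
    · simpa using hdeg
  -- conclude v k₀ = 0
  have := congrArg (Polynomial.eval (β (Fin.natAdd K k₀))) hp0
  rw [hp, Polynomial.eval_finset_sum, Polynomial.eval_zero] at this
  rw [Finset.sum_eq_single k₀ ?_ (by simp)] at this
  · rw [Polynomial.eval_mul, Polynomial.eval_C,
      Lagrange.eval_basis_self hβinj (Finset.mem_univ _), mul_one] at this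
    exact this
  · intro k _ hk
    have hne : Fin.natAdd K k ≠ Fin.natAdd K k₀ := fun h => hk (by
      have := congrArg Fin.val h
      simp only [Fin.coe_natAdd] at this
      exact Fin.ext (by omega))
    rw [Polynomial.eval_mul, Lagrange.eval_basis_of_ne hne (Finset.mem_univ _), mul_zero]
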